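/- arXiv:1702.08683 — 3 statements merged into one kernel-verified Lean document; each statement's English description precedes it below -/
import Mathlib

section
/- (Brezis–Lieb type pointwise inequality) Let G : ℝ^N → ℝ be convex and even with G(0) = 0. Then for every k > 1, every ε with 0 < ε < 1/k, and all x, y ∈ ℝ^N, one has |G(x + y) − G(x)| ≤ ε|G(kx) − kG(x)| + 2G(C_ε y), where C_ε = 1/(ε(k − 1)). -/
open MeasureTheory Filter Set

noncomputable section

abbrev Euc (N : ℕ) := EuclideanSpace ℝ (Fin N)

/-- Admissible G-function: (G1)-(G6). -/
def IsGFunction {N : ℕ} (G : Euc N → ℝ) : Prop :=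
  G 0 = 0 ∧
  ConvexOn ℝ Set.univ G ∧
  (∀ x, G (-x) = G x) ∧
  (∀ C : ℝ, ∃ R : ℝ, ∀ x : Euc N, R ≤ ‖x‖ → C * ‖x‖ ≤ G x) ∧
  (∃ K₁ : ℝ, 2 ≤ K₁ ∧ ∃ M₁ : ℝ, 0 < M₁ ∧ ∀ x : Euc N, M₁ ≤ ‖x‖ → G ((2:ℝ) • x) ≤ K₁ * G x) ∧
  (∃ K₂ : ℝ, 1 ≤ K₂ ∧ ∃ M₂ : ℝ, 0 < M₂ ∧ ∀ x : Euc N, M₂ ≤ ‖x‖ → G x ≤ (1/(2*K₂)) * G (K₂ • x))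

/-- Membership in the anisotropic Orlicz space L^G(I, ℝ^N). -/
def MemLG {N : ℕ} (G : Euc N → ℝ) (I : Set ℝ) (u : ℝ → Euc N) : Prop :=
  AEStronglyMeasurable u (volume.restrict I) ∧ IntegrableOn (fun t => G (u t)) I

/-- Luxemburg norm. -/
def luxNorm {N : ℕ} (G : Euc N → ℝ) (I : Set ℝ) (u : ℝ → Euc N) : ℝ :=
  sInf {α : ℝ | 0 < α ∧ (∫ t in I, G (α⁻¹ • u t)) ≤ 1}

/-- Modular. -/
def modular {N : ℕ} (G : Euc N → ℝ) (I : Set ℝ) (u : ℝ → Euc N) : ℝ :=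
  ∫ t in I, G (u t)

/-- Fenchel conjugate. -/
def fenchelConj {N : ℕ} (G : Euc N → ℝ) (y : Euc N) : ℝ :=
  ⨆ x : Euc N, ((inner ℝ x y : ℝ) - G x)

/-!
Put `θ = ε (k - 1)`, so that `C_ε = θ⁻¹` and `θ + ε = ε k < 1`. Convexity splits
`x + y = (1 - θ) • ((1 - θ)⁻¹ • x) + θ • (θ⁻¹ • y)`, and `(1 - θ)⁻¹ • x` is itself the combination
`((1 - θ - ε) • x + ε • (k • x)) / (1 - θ)` of `x` and `k • x`; together these give
`G (x + y) - G x ≤ ε (G (k x) - k G x) + θ G (C_ε y)`. The same bound for `-y`, evenness and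
midpoint convexity `2 G x ≤ G (x + y) + G (x - y)` control `G x - G (x + y)`.
-/

section ConvexOn

variable {E : Type*} [AddCommGroup E] [Module ℝ E] {G : E → ℝ}

theorem ConvexOn.two_mul_le_add_sub (hG : ConvexOn ℝ univ G) (x y : E) :
    2 * G x ≤ G (x + y) + G (x - y) := by
  have h := hG.2 (mem_univ (x + y)) (mem_univ (x - y)) (by norm_num : (0 : ℝ) ≤ 1 / 2)
    (by norm_num : (0 : ℝ) ≤ 1 / 2) (by norm_num)
  have hmid : (1 / 2 : ℝ) • (x + y) + (1 / 2 : ℝ) • (x - y) = x := by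
    rw [← smul_add, add_add_sub_cancel, ← two_smul ℝ x, smul_smul]
    norm_num
  rw [hmid, smul_eq_mul, smul_eq_mul] at h
  linarith

theorem ConvexOn.nonneg_of_even (hG : ConvexOn ℝ univ G) (h0 : G 0 = 0)
    (heven : ∀ x, G (-x) = G x) (x : E) : 0 ≤ G x := by
  have h := hG.two_mul_le_add_sub 0 x
  rw [zero_add, zero_sub, heven, h0] at h
  linarith

theorem ConvexOn.add_mul_map_smul_le (hG : ConvexOn ℝ univ G) {a b : ℝ} (ha : 0 ≤ a) (hb : 0 ≤ b)
    (hab : 0 < a + b) (u v : E) :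
    (a + b) * G ((a + b)⁻¹ • (a • u + b • v)) ≤ a * G u + b * G v := by
  have h := hG.2 (mem_univ u) (mem_univ v) (div_nonneg ha hab.le) (div_nonneg hb hab.le)
    (by field_simp)
  rw [smul_add, smul_smul, smul_smul, ← div_eq_inv_mul, ← div_eq_inv_mul]
  calc (a + b) * G ((a / (a + b)) • u + (b / (a + b)) • v)
      ≤ (a + b) * (a / (a + b) * G u + b / (a + b) * G v) :=
        mul_le_mul_of_nonneg_left (by simpa only [smul_eq_mul] using h) hab.le
    _ = a * G u + b * G v := by field_simp

theorem ConvexOn.map_add_sub_le (hG : ConvexOn ℝ univ G) {k ε : ℝ} (hk : 1 < k) (hε : 0 < ε)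
    (hεk : ε * k < 1) (x y : E) :
    G (x + y) - G x ≤ ε * (G (k • x) - k * G x) + ε * (k - 1) * G ((1 / (ε * (k - 1))) • y) := by
  set θ := ε * (k - 1)
  have hθ : 0 < θ := mul_pos hε (by linarith)
  have hrest : 0 < 1 - θ - ε := by linarith
  have hsplit : G (x + y) ≤ (1 - θ) * G ((1 - θ)⁻¹ • x) + θ * G (θ⁻¹ • y) := by
    have h := hG.2 (mem_univ ((1 - θ)⁻¹ • x)) (mem_univ (θ⁻¹ • y)) (by linarith) hθ.le
      (sub_add_cancel 1 θ)
    rwa [smul_smul, smul_smul, mul_inv_cancel₀ (by linarith), mul_inv_cancel₀ hθ.ne', one_smul,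
      one_smul] at h
  have hray : (1 - θ) * G ((1 - θ)⁻¹ • x) ≤ (1 - θ - ε) * G x + ε * G (k • x) := by
    have h := hG.add_mul_map_smul_le hrest.le hε.le (by linarith) x (k • x)
    rwa [smul_smul, ← add_smul, show 1 - θ - ε + ε * k = 1 by ring, one_smul,
      show 1 - θ - ε + ε = 1 - θ by ring] at h
  rw [one_div]
  linarith

end ConvexOn

theorem brezis_lieb_pointwise_general {N : ℕ} (G : Euc N → ℝ)
    (h0 : G 0 = 0) (hconv : ConvexOn ℝ Set.univ G) (heven : ∀ x, G (-x) = G x)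
    (k ε : ℝ) (hk : 1 < k) (hε : 0 < ε) (hεk : ε < 1 / k) (x y : Euc N) :
    |G (x + y) - G x| ≤
      ε * |G (k • x) - k * G x| + 2 * G ((1 / (ε * (k - 1))) • y) := by
  have hεk' : ε * k < 1 := (lt_div_iff₀ (by linarith)).1 hεk
  have hupper := hconv.map_add_sub_le hk hε hεk' x y
  have hlower := hconv.map_add_sub_le hk hε hεk' x (-y)
  rw [smul_neg, heven, ← sub_eq_add_neg] at hlower
  have hmid := hconv.two_mul_le_add_sub x y
  have hD := mul_le_mul_of_nonneg_left (le_abs_self (G (k • x) - k * G x)) hε.le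
  have hθ : ε * (k - 1) * G ((1 / (ε * (k - 1))) • y) ≤ 2 * G ((1 / (ε * (k - 1))) • y) :=
    mul_le_mul_of_nonneg_right (by linarith) (hconv.nonneg_of_even h0 heven _)
  rw [abs_le]
  constructor <;> linarith

/-- Brezis–Lieb type pointwise inequality. -/
theorem brezis_lieb_pointwise {N : ℕ} (hN : 1 ≤ N) (G : Euc N → ℝ)
    (h0 : G 0 = 0) (hconv : ConvexOn ℝ Set.univ G) (heven : ∀ x, G (-x) = G x)
    (k ε : ℝ) (hk : 1 < k) (hε : 0 < ε) (hεk : ε < 1 / k) (x y : Euc N) :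
    |G (x + y) - G x| ≤
      ε * |G (k • x) - k * G x| + 2 * G ((1 / (ε * (k - 1))) • y) :=
  brezis_lieb_pointwise_general G h0 hconv heven k ε hk hε hεk x y

end
end

section
/- (Riesz-type lemma) Let G : ℝ^N → ℝ be an admissible G-function and I ⊂ ℝ a bounded nondegenerate interval. Suppose u_n, u ∈ L^G(I,ℝ^N), u_n(t) → u(t) for almost every t ∈ I, and R_G(u_n) → R_G(u). Then ‖u_n − u‖_G → 0. -/
/-!
Convexity and evenness make `G` nonnegative and nondecreasing along rays, and together with
continuity this upgrades the Δ₂ condition at infinity to the global bound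
`G (c • x) ≤ A * G x + B` for every scalar `c`. By convexity,
`G (c • (uₙ - w)) ≤ (G (2c • uₙ) + G (2c • w)) / 2`, and the right-hand side is dominated by
`A/2 * G uₙ + A/2 * G w + B`, whose integrals converge by assumption. A dominated convergence
theorem with converging dominants (Fatou applied to the difference) then gives
`∫ G (c • (uₙ - w)) → 0` for every `c`, which is exactly Luxemburg norm convergence.
-/

open MeasureTheory Filter Set

noncomputable section

open Topology

section EvenConvex

variable {E : Type*} [NormedAddCommGroup E] [NormedSpace ℝ E] {G : E → ℝ}

lemma ConvexOn.apply_zero_le_of_even (hc : ConvexOn ℝ univ G) (he : ∀ x, G (-x) = G x)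
    (x : E) : G 0 ≤ G x := by
  have := hc.2 (mem_univ x) (mem_univ (-x)) (by norm_num : (0 : ℝ) ≤ 1 / 2)
    (by norm_num : (0 : ℝ) ≤ 1 / 2) (by norm_num)
  rw [smul_neg, add_neg_cancel, he, smul_eq_mul] at this
  linarith

lemma ConvexOn.apply_smul_le_apply_smul_of_even (hc : ConvexOn ℝ univ G)
    (he : ∀ x, G (-x) = G x) (x : E) {s t : ℝ} (hs : 0 ≤ s) (hst : s ≤ t) :
    G (s • x) ≤ G (t • x) := by
  obtain rfl | ht := (hs.trans hst).eq_or_lt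
  · rw [le_antisymm hst hs]
  have hst' : s / t ≤ 1 := (div_le_one ht).2 hst
  have hsx : s • x = (s / t) • (t • x) + (1 - s / t) • (0 : E) := by
    rw [smul_zero, add_zero, smul_smul, div_mul_cancel₀ _ ht.ne']
  have hconv := hc.2 (mem_univ (t • x)) (mem_univ 0) (by positivity) (sub_nonneg.2 hst')
    (add_sub_cancel _ _)
  rw [← hsx, smul_eq_mul, smul_eq_mul] at hconv
  nlinarith [hc.apply_zero_le_of_even he (t • x)]

lemma ConvexOn.exists_apply_smul_le_of_doubling [ProperSpace E] (hc : ConvexOn ℝ univ G)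
    (he : ∀ x, G (-x) = G x) (h0 : G 0 = 0) (hcont : Continuous G) {K M : ℝ} (hK : 0 ≤ K)
    (hdouble : ∀ x : E, M ≤ ‖x‖ → G ((2 : ℝ) • x) ≤ K * G x) (c : ℝ) :
    ∃ A B : ℝ, ∀ x, G (c • x) ≤ A * G x + B := by
  have hnonneg : ∀ x, 0 ≤ G x := fun x ↦ h0 ▸ hc.apply_zero_le_of_even he x
  obtain ⟨C, hC⟩ := (isCompact_closedBall (0 : E) (2 * M)).exists_bound_of_continuousOn
    hcont.continuousOn
  have hdouble' : ∀ x : E, G ((2 : ℝ) • x) ≤ K * G x + |C| := by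
    intro x
    rcases le_or_gt M ‖x‖ with hx | hx
    · linarith [hdouble x hx, abs_nonneg C]
    · have h2x : (2 : ℝ) • x ∈ Metric.closedBall (0 : E) (2 * M) := by
        rw [mem_closedBall_zero_iff, norm_smul, Real.norm_two]
        linarith
      linarith [Real.le_norm_self (G ((2 : ℝ) • x)), hC _ h2x, le_abs_self C,
        mul_nonneg hK (hnonneg x)]
  have hpow : ∀ m : ℕ, ∃ B, ∀ x, G (((2 : ℝ) ^ m) • x) ≤ K ^ m * G x + B := by
    intro m
    induction m with
    | zero => exact ⟨0, fun x ↦ by simp⟩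
    | succ m ih =>
      obtain ⟨B, hB⟩ := ih
      refine ⟨K * B + |C|, fun x ↦ ?_⟩
      calc G (((2 : ℝ) ^ (m + 1)) • x) = G ((2 : ℝ) • ((2 : ℝ) ^ m • x)) := by
            rw [smul_smul, pow_succ']
        _ ≤ K * G ((2 : ℝ) ^ m • x) + |C| := hdouble' _
        _ ≤ K * (K ^ m * G x + B) + |C| := by gcongr; exact hB x
        _ = K ^ (m + 1) * G x + (K * B + |C|) := by ring
  obtain ⟨m, hm⟩ := pow_unbounded_of_one_lt |c| (by norm_num : (1 : ℝ) < 2)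
  obtain ⟨B, hB⟩ := hpow m
  refine ⟨K ^ m, B, fun x ↦ ?_⟩
  have habs : G (c • x) = G (|c| • x) := by
    rcases abs_choice c with h | h <;> rw [h]
    rw [neg_smul, he]
  rw [habs]
  exact (hc.apply_smul_le_apply_smul_of_even he x (abs_nonneg c) hm.le).trans (hB x)

end EvenConvex

theorem tendsto_integral_zero_of_le_of_tendsto_integral {α : Type*} [MeasurableSpace α]
    {μ : Measure α} {f g : ℕ → α → ℝ} {g₀ : α → ℝ} (hf_meas : ∀ n, AEStronglyMeasurable (f n) μ)
    (hg : ∀ n, Integrable (g n) μ) (hg₀ : Integrable g₀ μ) (hf_nonneg : ∀ n, 0 ≤ᵐ[μ] f n)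
    (hfg : ∀ n, f n ≤ᵐ[μ] g n) (hf_lim : ∀ᵐ x ∂μ, Tendsto (f · x) atTop (𝓝 0))
    (hg_lim : ∀ᵐ x ∂μ, Tendsto (g · x) atTop (𝓝 (g₀ x)))
    (hg_int : Tendsto (fun n ↦ ∫ x, g n x ∂μ) atTop (𝓝 (∫ x, g₀ x ∂μ))) :
    Tendsto (fun n ↦ ∫ x, f n x ∂μ) atTop (𝓝 0) := by
  have hf : ∀ n, Integrable (f n) μ := fun n ↦ (hg n).mono' (hf_meas n) <| by
    filter_upwards [hf_nonneg n, hfg n] with x h0 h1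
    rwa [Real.norm_of_nonneg h0]
  have hgf_nonneg : ∀ n, 0 ≤ᵐ[μ] g n - f n := fun n ↦ by
    filter_upwards [hfg n] with x h using sub_nonneg.2 h
  have hg₀_nonneg : 0 ≤ᵐ[μ] g₀ := by
    filter_upwards [hg_lim, ae_all_iff.2 hf_nonneg, ae_all_iff.2 hfg] with x hx h0 h1
    exact ge_of_tendsto' hx fun n ↦ (h0 n).trans (h1 n)
  have fatou : ENNReal.ofReal (∫ x, g₀ x ∂μ) ≤
      liminf (fun n ↦ ENNReal.ofReal (∫ x, g n x ∂μ - ∫ x, f n x ∂μ)) atTop := by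
    calc ENNReal.ofReal (∫ x, g₀ x ∂μ) = ∫⁻ x, ENNReal.ofReal (g₀ x) ∂μ :=
          ofReal_integral_eq_lintegral_ofReal hg₀ hg₀_nonneg
      _ = ∫⁻ x, liminf (fun n ↦ ENNReal.ofReal (g n x - f n x)) atTop ∂μ := by
          refine lintegral_congr_ae ?_
          filter_upwards [hf_lim, hg_lim] with x hfx hgx
          simpa using ((ENNReal.tendsto_ofReal (hgx.sub hfx)).liminf_eq).symm
      _ ≤ liminf (fun n ↦ ∫⁻ x, ENNReal.ofReal (g n x - f n x) ∂μ) atTop :=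
          lintegral_liminf_le' fun n ↦ ((hg n).sub (hf n)).aemeasurable.ennreal_ofReal
      _ = _ := by
          congr 1
          funext n
          rw [← integral_sub (hg n) (hf n)]
          exact (ofReal_integral_eq_lintegral_ofReal ((hg n).sub (hf n)) (hgf_nonneg n)).symm
  refine tendsto_order.2 ⟨fun a ha ↦ .of_forall fun n ↦
    ha.trans_le (integral_nonneg_of_ae (hf_nonneg n)), fun ε hε ↦ ?_⟩
  by_contra hfreq
  simp only [not_eventually, not_lt] at hfreq
  have hsmall : ∃ᶠ n in atTop, 0 ≤ ∫ x, g n x ∂μ - ∫ x, f n x ∂μ ∧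
      ∫ x, g n x ∂μ - ∫ x, f n x ∂μ ≤ ∫ x, g₀ x ∂μ - ε / 2 := by
    refine (hfreq.and_eventually (hg_int.eventually (gt_mem_nhds
      (by linarith : ∫ x, g₀ x ∂μ < ∫ x, g₀ x ∂μ + ε / 2)))).mono fun n ⟨h1, h2⟩ ↦ ⟨?_, by linarith⟩
    exact sub_nonneg.2 (integral_mono_ae (hf n) (hg n) (hfg n))
  obtain ⟨n, hn0, hn⟩ := hsmall.exists
  have hle := fatou.trans (liminf_le_of_frequently_le' (hsmall.mono fun n h ↦
    ENNReal.ofReal_le_ofReal h.2))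
  rw [ENNReal.ofReal_le_ofReal_iff (by linarith)] at hle
  linarith

theorem tendsto_integral_apply_smul_sub {α E : Type*} [MeasurableSpace α] {μ : Measure α}
    [IsFiniteMeasure μ] [NormedAddCommGroup E] [NormedSpace ℝ E] {G : E → ℝ}
    (hc : ConvexOn ℝ univ G) (he : ∀ x, G (-x) = G x) (h0 : G 0 = 0) (hcont : Continuous G)
    (hΔ : ∀ c : ℝ, ∃ A B : ℝ, ∀ x, G (c • x) ≤ A * G x + B)
    {u : ℕ → α → E} {w : α → E} (hu_meas : ∀ n, AEStronglyMeasurable (u n) μ)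
    (hw_meas : AEStronglyMeasurable w μ) (hu : ∀ n, Integrable (fun t ↦ G (u n t)) μ)
    (hw : Integrable (fun t ↦ G (w t)) μ) (hae : ∀ᵐ t ∂μ, Tendsto (u · t) atTop (𝓝 (w t)))
    (hmod : Tendsto (fun n ↦ ∫ t, G (u n t) ∂μ) atTop (𝓝 (∫ t, G (w t) ∂μ))) (c : ℝ) :
    Tendsto (fun n ↦ ∫ t, G (c • (u n t - w t)) ∂μ) atTop (𝓝 0) := by
  obtain ⟨A, B, hAB⟩ := hΔ (2 * c)
  have hbound (y z : E) : G (c • (y - z)) ≤ A / 2 * (G y + G z) + B := by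
    have hmid : c • (y - z) = (1 / 2 : ℝ) • ((2 * c) • y) + (1 / 2 : ℝ) • -((2 * c) • z) := by
      module
    have := hc.2 (mem_univ ((2 * c) • y)) (mem_univ (-((2 * c) • z)))
      (by norm_num : (0 : ℝ) ≤ 1 / 2) (by norm_num : (0 : ℝ) ≤ 1 / 2) (by norm_num)
    rw [← hmid, he, smul_eq_mul, smul_eq_mul] at this
    linarith [hAB y, hAB z]
  have hint {φ ψ : α → ℝ} (hφ : Integrable φ μ) (hψ : Integrable ψ μ) :
      ∫ t, A / 2 * (φ t + ψ t) + B ∂μ = A / 2 * (∫ t, φ t ∂μ + ∫ t, ψ t ∂μ) + μ.real univ • B := by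
    have hφψ : Integrable (fun t ↦ A / 2 * (φ t + ψ t)) μ := (hφ.add hψ).const_mul _
    rw [integral_add hφψ (integrable_const B), integral_const_mul,
      integral_add hφ hψ, integral_const]
  refine tendsto_integral_zero_of_le_of_tendsto_integral
    (g := fun n t ↦ A / 2 * (G (u n t) + G (w t)) + B)
    (g₀ := fun t ↦ A / 2 * (G (w t) + G (w t)) + B)
    (fun n ↦ hcont.comp_aestronglyMeasurable (((hu_meas n).sub hw_meas).const_smul c))
    (fun n ↦ (((hu n).add hw).const_mul _).add (integrable_const B))
    (((hw.add hw).const_mul _).add (integrable_const B))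
    (fun n ↦ .of_forall fun t ↦ (h0 ▸ hc.apply_zero_le_of_even he _ : 0 ≤ G _))
    (fun n ↦ .of_forall fun t ↦ hbound _ _) ?_ ?_ ?_
  · filter_upwards [hae] with t ht
    exact (hcont.tendsto' 0 0 h0).comp (by simpa using (ht.sub_const (w t)).const_smul c)
  · filter_upwards [hae] with t ht
    exact ((((hcont.tendsto _).comp ht).add_const _).const_mul _).add_const _
  · simp only [hint (hu _) hw, hint hw hw]
    exact ((hmod.add_const _).const_mul _).add_const _

section Luxemburg

variable {N : ℕ} {G : Euc N → ℝ} {I : Set ℝ}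

lemma luxNorm_nonneg (u : ℝ → Euc N) : 0 ≤ luxNorm G I u :=
  Real.sInf_nonneg fun _ hα ↦ hα.1.le

lemma luxNorm_le_of_integral_le_one {u : ℝ → Euc N} {α : ℝ} (hα : 0 < α)
    (h : ∫ t in I, G (α⁻¹ • u t) ≤ 1) : luxNorm G I u ≤ α :=
  csInf_le ⟨0, fun _ hβ ↦ hβ.1.le⟩ ⟨hα, h⟩

lemma tendsto_luxNorm_zero {v : ℕ → ℝ → Euc N}
    (h : ∀ c : ℝ, Tendsto (fun n ↦ ∫ t in I, G (c • v n t)) atTop (𝓝 0)) :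
    Tendsto (fun n ↦ luxNorm G I (v n)) atTop (𝓝 0) := by
  refine tendsto_order.2 ⟨fun a ha ↦ .of_forall fun n ↦ ha.trans_le (luxNorm_nonneg _),
    fun ε hε ↦ ?_⟩
  filter_upwards [(h (ε / 2)⁻¹).eventually (gt_mem_nhds one_pos)] with n hn
  exact (luxNorm_le_of_integral_le_one (half_pos hε) hn.le).trans_lt (half_lt_self hε)

end Luxemburg

theorem riesz_type_lemma_general {N : ℕ} (G : Euc N → ℝ) (hG : IsGFunction G)
    (I : Set ℝ) (a b : ℝ) (hI2 : I ⊆ Icc a b)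
    (u : ℕ → ℝ → Euc N) (w : ℝ → Euc N)
    (hu : ∀ n, MemLG G I (u n)) (hw : MemLG G I w)
    (hae : ∀ᵐ t ∂(volume.restrict I), Tendsto (fun n => u n t) atTop (nhds (w t)))
    (hmod : Tendsto (fun n => modular G I (u n)) atTop (nhds (modular G I w))) :
    Tendsto (fun n => luxNorm G I (fun t => u n t - w t)) atTop (nhds 0) := by
  obtain ⟨h0, hc, he, -, ⟨K, hK, M, -, hdouble⟩, -⟩ := hG
  have hcont : Continuous G := continuousOn_univ.1 (hc.continuousOn isOpen_univ)
  have : IsFiniteMeasure (volume.restrict I) :=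
    isFiniteMeasure_restrict.2 ((measure_mono hI2).trans_lt measure_Icc_lt_top).ne
  exact tendsto_luxNorm_zero fun c ↦ tendsto_integral_apply_smul_sub hc he h0 hcont
    (hc.exists_apply_smul_le_of_doubling he h0 hcont (by linarith) hdouble)
    (fun n ↦ (hu n).1) hw.1 (fun n ↦ (hu n).2) hw.2 hae hmod c

/-- Riesz-type lemma: a.e. convergence plus convergence of modulars
implies norm convergence. -/
theorem riesz_type_lemma {N : ℕ} (hN : 1 ≤ N) (G : Euc N → ℝ) (hG : IsGFunction G)
    (I : Set ℝ) (a b : ℝ) (hab : a < b) (hI1 : Ioo a b ⊆ I) (hI2 : I ⊆ Icc a b)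
    (u : ℕ → ℝ → Euc N) (w : ℝ → Euc N)
    (hu : ∀ n, MemLG G I (u n)) (hw : MemLG G I w)
    (hae : ∀ᵐ t ∂(volume.restrict I), Tendsto (fun n => u n t) atTop (nhds (w t)))
    (hmod : Tendsto (fun n => modular G I (u n)) atTop (nhds (modular G I w))) :
    Tendsto (fun n => luxNorm G I (fun t => u n t - w t)) atTop (nhds 0) :=
  riesz_type_lemma_general G hG I a b hI2 u w hu hw hae hmod

end
end

section
/- (Directional derivative of the principal part, general Lagrangian) Let G : ℝ^N → ℝ be an admissible G-function of class C¹ with gradient ∇G and Fenchel conjugate G*, and let I = [a,b] be a compact nondegenerate interval. Let F : I × ℝ^N × ℝ^N → ℝ be of class C¹, with F_x(t,x,v) and F_v(t,x,v) denoting the gradients of F with respect to its second and third arguments, and suppose there are a continuous function a : [0,∞) → [0,∞) and nonnegative b, c ∈ L¹(I,ℝ) such that for all (t,x,v): (F2) |F(t,x,v)| ≤ a(|x|)(b(t) + G(v)); (F3) |F_x(t,x,v)| ≤ a(|x|)(b(t) + G(v)); (F4) G*(F_v(t,x,v)) ≤ a(|x|)(c(t) + G*(∇G(v))). Let u, φ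 : I → ℝ^N be absolutely continuous with u(t) = u(a) + ∫_a^t u̇ and φ(t) = φ(a) + ∫_a^t φ̇, where u, u̇, φ, φ̇ ∈ L^G(I,ℝ^N). Then for every s ∈ [−1,1] the integral ψ(s) = ∫_I F(t, u(t) + s·φ(t), u̇(t) + s·φ̇(t)) dt is finite, and ψ is differentiable at s = 0 with ψ'(0) = ∫_I [⟨F_x(t,u(t),u̇(t)), φ(t)⟩ + ⟨F_v(t,u(t),u̇(t)), φ̇(t)⟩] dt, both integrands being integrable on I. -/
open MeasureTheory Filter Set

noncomputable section

/-! On the compact interval `u` and `φ` are continuous, so `a (|u + s φ|)` is bounded by a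
constant uniformly in `|s| ≤ 1`. Convexity and the Δ₂ condition bound `G (u̇ + s φ̇)` and
`G (2 (u̇ + s φ̇))` by integrable functions independent of `s`, and `G* (∇G v) ≤ G (2 v)`.
Hence (F2) dominates the integrand, (F3) and the boundedness of `φ` dominate `⟨F_x, φ⟩`, and
(F4) with the Young inequality `|⟨y, z⟩| ≤ G z + G* y` dominates `⟨F_v, φ̇⟩`, all uniformly in
`s`; differentiation under the integral sign concludes. -/

open scoped InnerProductSpace ENNReal

lemma le_mul_abs_add_of_le_mul_add {X α β c d A : ℝ} (hX : X ≤ α * (β + c)) (hα : |α| ≤ A)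
    (hc : 0 ≤ c) (hcd : c ≤ d) : X ≤ A * (|β| + d) :=
  calc X ≤ |α * (β + c)| := hX.trans (le_abs_self _)
    _ = |α| * |β + c| := abs_mul _ _
    _ ≤ A * (|β| + d) := by
      gcongr
      · exact (abs_nonneg α).trans hα
      · calc |β + c| ≤ |β| + |c| := abs_add_le β c
          _ ≤ |β| + d := by rw [abs_of_nonneg hc]; linarith

lemma ConvexOn.add_inner_le_of_hasGradientAt {E : Type*} [NormedAddCommGroup E]
    [InnerProductSpace ℝ E] [CompleteSpace E] {f : E → ℝ} (hf : ConvexOn ℝ univ f) {g v : E}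
    (hg : HasGradientAt f g v) (x : E) : f v + ⟪g, x - v⟫_ℝ ≤ f x := by
  have hline : ConvexOn ℝ univ (f ∘ (AffineMap.lineMap v x : ℝ → E)) := hf.comp_affineMap _
  have hderiv : HasDerivAt (f ∘ (AffineMap.lineMap v x : ℝ → E)) ⟪g, x - v⟫_ℝ 0 := by
    have hg' : HasFDerivAt f (InnerProductSpace.toDual ℝ E g) (AffineMap.lineMap v x (0:ℝ)) := by
      simpa using hg.hasFDerivAt
    simpa using hg'.comp_hasDerivAt (0:ℝ) AffineMap.hasDerivAt_lineMap
  have := hline.le_slope_of_hasDerivAt (mem_univ 0) (mem_univ 1) zero_lt_one hderiv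
  simp only [slope_def_field, Function.comp_apply, AffineMap.lineMap_apply_one,
    AffineMap.lineMap_apply_zero, sub_zero, div_one] at this
  linarith

namespace IsGFunction

variable {N : ℕ} {G : Euc N → ℝ}

lemma nonneg (hG : IsGFunction G) (x : Euc N) : 0 ≤ G x := by
  obtain ⟨hG0, hconv, heven, -⟩ := hG
  have := hconv.2 (mem_univ x) (mem_univ (-x)) (by norm_num : (0:ℝ) ≤ 1/2)
    (by norm_num : (0:ℝ) ≤ 1/2) (by norm_num)
  simp only [smul_neg, add_neg_cancel, hG0, heven, smul_eq_mul] at this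
  linarith

lemma continuous (hG : IsGFunction G) : Continuous G :=
  continuousOn_univ.mp (hG.2.1.continuousOn isOpen_univ)

lemma apply_smul_le (hG : IsGFunction G) {l : ℝ} (hl : |l| ≤ 1) (x : Euc N) :
    G (l • x) ≤ G x := by
  obtain ⟨-, hconv, heven, -⟩ := hG
  obtain ⟨hl₁, hl₂⟩ := abs_le.1 hl
  have := hconv.2 (mem_univ x) (mem_univ (-x)) (by linarith : (0:ℝ) ≤ (1 + l) / 2)
    (by linarith : (0:ℝ) ≤ (1 - l) / 2) (by ring)
  have hcomb : ((1 + l) / 2 : ℝ) • x + ((1 - l) / 2 : ℝ) • (-x) = l • x := by module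
  rw [hcomb, heven, smul_eq_mul, smul_eq_mul] at this
  linarith

/-- `C` bounds `G (2 • x)` on the compact ball `‖x‖ ≤ M₁`, where Δ₂ gives no information. -/
lemma exists_apply_two_smul_le (hG : IsGFunction G) :
    ∃ K C : ℝ, ∀ x : Euc N, G ((2:ℝ) • x) ≤ K * G x + C := by
  obtain ⟨K, hK, M, hM, hΔ⟩ := hG.2.2.2.2.1
  obtain ⟨C, hC⟩ := (isCompact_closedBall (0 : Euc N) M).exists_bound_of_continuousOn
    (hG.continuous.comp (continuous_const_smul (2:ℝ))).continuousOn
  have hC₀ : 0 ≤ C := (norm_nonneg _).trans (hC 0 (by simpa using hM.le))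
  refine ⟨K, C, fun x => ?_⟩
  rcases le_total ‖x‖ M with hx | hx
  · have hKG : 0 ≤ K * G x := mul_nonneg (by linarith) (hG.nonneg x)
    have h2x : G ((2:ℝ) • x) ≤ C := (le_abs_self _).trans (hC x (by simpa using hx))
    linarith
  · linarith [hΔ x hx]

lemma apply_add_smul_le (hG : IsGFunction G) {K C : ℝ}
    (hΔ : ∀ x : Euc N, G ((2:ℝ) • x) ≤ K * G x + C) {s : ℝ} (hs : |s| ≤ 1) (p q : Euc N) :
    G (p + s • q) ≤ K / 2 * (G p + G q) + C := by
  have hconv := hG.2.1.2 (mem_univ ((2:ℝ) • p)) (mem_univ (s • (2:ℝ) • q))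
    (by norm_num : (0:ℝ) ≤ 1/2) (by norm_num : (0:ℝ) ≤ 1/2) (by norm_num)
  have hcomb : (1/2:ℝ) • (2:ℝ) • p + (1/2:ℝ) • s • (2:ℝ) • q = p + s • q := by module
  rw [hcomb, smul_eq_mul, smul_eq_mul] at hconv
  linarith [hG.apply_smul_le hs ((2:ℝ) • q), hΔ p, hΔ q]

lemma bddAbove_range_inner_sub (hG : IsGFunction G) (y : Euc N) :
    BddAbove (range fun x : Euc N => ⟪x, y⟫_ℝ - G x) := by
  obtain ⟨R, hR⟩ := hG.2.2.2.1 ‖y‖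
  refine ⟨|R| * ‖y‖, ?_⟩
  rintro _ ⟨x, rfl⟩
  have hxy : ⟪x, y⟫_ℝ ≤ ‖x‖ * ‖y‖ := real_inner_le_norm x y
  rcases le_total R ‖x‖ with hx | hx
  · have := hR x hx
    nlinarith [abs_nonneg R, norm_nonneg y]
  · have : ‖x‖ ≤ |R| := hx.trans (le_abs_self R)
    nlinarith [hG.nonneg x, norm_nonneg y]

lemma inner_sub_le_fenchelConj (hG : IsGFunction G) (x y : Euc N) :
    ⟪x, y⟫_ℝ - G x ≤ fenchelConj G y :=
  le_ciSup (hG.bddAbove_range_inner_sub y) x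

lemma fenchelConj_nonneg (hG : IsGFunction G) (y : Euc N) : 0 ≤ fenchelConj G y := by
  simpa [hG.1] using hG.inner_sub_le_fenchelConj 0 y

lemma abs_inner_le_add_fenchelConj (hG : IsGFunction G) (y z : Euc N) :
    |⟪y, z⟫_ℝ| ≤ G z + fenchelConj G y := by
  have h₁ := hG.inner_sub_le_fenchelConj z y
  have h₂ := hG.inner_sub_le_fenchelConj (-z) y
  rw [inner_neg_left, hG.2.2.1, real_inner_comm] at h₂
  rw [real_inner_comm] at h₁
  exact abs_le.2 ⟨by linarith, by linarith⟩

/-- By the subgradient inequality at `v` and at `2 • v`,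
`⟪x, ∇G v⟫ - G x ≤ ⟪∇G v, v⟫ - G v ≤ G (2 • v) - 2 G v`. -/
lemma fenchelConj_le_apply_two_smul (hG : IsGFunction G) {g v : Euc N}
    (hg : HasGradientAt G g v) : fenchelConj G g ≤ G ((2:ℝ) • v) := by
  refine ciSup_le fun x => ?_
  have hx := hG.2.1.add_inner_le_of_hasGradientAt hg x
  have h2v := hG.2.1.add_inner_le_of_hasGradientAt hg ((2:ℝ) • v)
  have h2v_sub : (2:ℝ) • v - v = v := by module
  rw [h2v_sub] at h2v
  rw [inner_sub_right] at hx
  rw [real_inner_comm]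
  linarith [hG.nonneg v]

end IsGFunction

lemma continuousOn_of_eq_add_intervalIntegral {E : Type*} [NormedAddCommGroup E]
    [NormedSpace ℝ E] {a b : ℝ} {u du : ℝ → E} (hdu : IntegrableOn du (Icc a b))
    (hu : ∀ t ∈ Icc a b, u t = u a + ∫ s in a..t, du s) : ContinuousOn u (Icc a b) :=
  ((continuousOn_const (c := u a)).add (intervalIntegral.continuousOn_primitive hdu)).congr
    fun t ht => by simp only [hu t ht, intervalIntegral.integral_of_le ht.1, Pi.add_apply]

lemma IsCompact.exists_bound_comp_add_smul {E : Type*} [NormedAddCommGroup E] [NormedSpace ℝ E]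
    {I : Set ℝ} (hI : IsCompact I) {u φ : ℝ → E} (hu : ContinuousOn u I) (hφ : ContinuousOn φ I)
    {f : E → ℝ} (hf : Continuous f) :
    ∃ A, ∀ s ∈ Icc (-1:ℝ) 1, ∀ t ∈ I, |f (u t + s • φ t)| ≤ A := by
  have hcont : ContinuousOn (fun p : ℝ × ℝ => f (u p.2 + p.1 • φ p.2)) (Icc (-1) 1 ×ˢ I) :=
    hf.comp_continuousOn ((hu.comp continuousOn_snd fun _ hp => hp.2).add
      (continuousOn_fst.smul (hφ.comp continuousOn_snd fun _ hp => hp.2)))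
  obtain ⟨A, hA⟩ := (isCompact_Icc.prod hI).exists_bound_of_continuousOn hcont
  exact ⟨A, fun s hs t ht => hA (s, t) ⟨hs, ht⟩⟩

namespace MemLG

variable {N : ℕ} {G : Euc N → ℝ} {I : Set ℝ} {p q : ℝ → Euc N}

lemma two_smul (hG : IsGFunction G) (hI : volume I ≠ ∞) (hp : MemLG G I p) :
    MemLG G I (fun t => (2:ℝ) • p t) := by
  obtain ⟨K, C, hΔ⟩ := hG.exists_apply_two_smul_le
  have hmeas := hp.1.const_smul (2:ℝ)
  refine ⟨hmeas, Integrable.mono' ((hp.2.const_mul K).add (integrableOn_const (C := C) hI))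
    (hG.continuous.comp_aestronglyMeasurable hmeas) (Eventually.of_forall fun t => ?_)⟩
  rw [Real.norm_of_nonneg (hG.nonneg _)]
  exact hΔ (p t)

lemma exists_bound_add_smul (hG : IsGFunction G) (hI : volume I ≠ ∞) (hp : MemLG G I p)
    (hq : MemLG G I q) : ∃ g : ℝ → ℝ, IntegrableOn g I ∧
      ∀ s ∈ Icc (-1:ℝ) 1, ∀ t, G (p t + s • q t) ≤ g t := by
  obtain ⟨K, C, hΔ⟩ := hG.exists_apply_two_smul_le
  exact ⟨fun t => K / 2 * (G (p t) + G (q t)) + C,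
    ((hp.2.add hq.2).const_mul _).add (integrableOn_const hI),
    fun s hs t => hG.apply_add_smul_le hΔ (abs_le.2 hs) (p t) (q t)⟩

end MemLG

section Lagrangian

variable {E : Type*} [NormedAddCommGroup E] [InnerProductSpace ℝ E] [CompleteSpace E]

lemma HasGradientAt.toDual_eq_fderiv_comp {P : Type*} [NormedAddCommGroup P] [NormedSpace ℝ P]
    {f : P → ℝ} {c : E → P} {j : E →L[ℝ] P} {e g : E} (hf : DifferentiableAt ℝ f (c e))
    (hc : HasFDerivAt c j e) (hg : HasGradientAt (f ∘ c) g e) :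
    InnerProductSpace.toDual ℝ E g = (fderiv ℝ f (c e)).comp j :=
  hg.hasFDerivAt.unique (hf.hasFDerivAt.comp e hc)

lemma continuous_of_toDual_eq_fderiv_comp {P : Type*} [NormedAddCommGroup P] [NormedSpace ℝ P]
    {f : P → ℝ} (hf : ContDiff ℝ 1 f) {g : P → E} {j : E →L[ℝ] P}
    (hg : ∀ p, InnerProductSpace.toDual ℝ E (g p) = (fderiv ℝ f p).comp j) : Continuous g := by
  have hg_eq : g = fun p => (InnerProductSpace.toDual ℝ E).symm ((fderiv ℝ f p).comp j) :=
    funext fun p => by rw [← hg, LinearIsometryEquiv.symm_apply_apply]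
  rw [hg_eq]
  exact (InnerProductSpace.toDual ℝ E).symm.continuous.comp
    ((hf.continuous_fderiv one_ne_zero).clm_comp continuous_const)

variable {F : ℝ → E → E → ℝ} {Fx Fv : ℝ → E → E → E}

lemma toDual_gradient_fst_eq (hF : Differentiable ℝ (fun p : ℝ × E × E => F p.1 p.2.1 p.2.2))
    {t : ℝ} {x v : E} (hFx : HasGradientAt (fun x' => F t x' v) (Fx t x v) x) :
    InnerProductSpace.toDual ℝ E (Fx t x v) =
      (fderiv ℝ (fun p : ℝ × E × E => F p.1 p.2.1 p.2.2) (t, x, v)).comp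
        ((ContinuousLinearMap.inr ℝ ℝ (E × E)).comp (ContinuousLinearMap.inl ℝ E E)) :=
  hFx.toDual_eq_fderiv_comp (c := fun x' => (t, x', v)) (hF _)
    ((hasFDerivAt_prodMk_right t (x, v)).comp x (hasFDerivAt_prodMk_left x v))

lemma toDual_gradient_snd_eq (hF : Differentiable ℝ (fun p : ℝ × E × E => F p.1 p.2.1 p.2.2))
    {t : ℝ} {x v : E} (hFv : HasGradientAt (fun v' => F t x v') (Fv t x v) v) :
    InnerProductSpace.toDual ℝ E (Fv t x v) =
      (fderiv ℝ (fun p : ℝ × E × E => F p.1 p.2.1 p.2.2) (t, x, v)).comp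
        ((ContinuousLinearMap.inr ℝ ℝ (E × E)).comp (ContinuousLinearMap.inr ℝ E E)) :=
  hFv.toDual_eq_fderiv_comp (c := fun v' => (t, x, v')) (hF _)
    ((hasFDerivAt_prodMk_right t (x, v)).comp v (hasFDerivAt_prodMk_right x v))

lemma hasDerivAt_apply_add_smul (hF : Differentiable ℝ (fun p : ℝ × E × E => F p.1 p.2.1 p.2.2))
    (hFx : ∀ t x v, HasGradientAt (fun x' => F t x' v) (Fx t x v) x)
    (hFv : ∀ t x v, HasGradientAt (fun v' => F t x v') (Fv t x v) v) (t : ℝ) (x y v w : E)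
    (s : ℝ) :
    HasDerivAt (fun s : ℝ => F t (x + s • y) (v + s • w))
      (⟪Fx t (x + s • y) (v + s • w), y⟫_ℝ + ⟪Fv t (x + s • y) (v + s • w), w⟫_ℝ) s := by
  have hline : HasDerivAt (fun s : ℝ => (t, x + s • y, v + s • w)) ((0 : ℝ), y, w) s := by
    simpa using (hasDerivAt_const s t).prodMk
      ((((hasDerivAt_id s).smul_const y).const_add x).prodMk
        (((hasDerivAt_id s).smul_const w).const_add v))
  refine ((hF _).hasFDerivAt.comp_hasDerivAt s hline).congr_deriv ?_
  have hyw : ((0 : ℝ), y, w) = ((ContinuousLinearMap.inr ℝ ℝ (E × E)).comp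
      (ContinuousLinearMap.inl ℝ E E)) y + ((ContinuousLinearMap.inr ℝ ℝ (E × E)).comp
      (ContinuousLinearMap.inr ℝ E E)) w := by simp
  rw [hyw, map_add, ← ContinuousLinearMap.comp_apply, ← ContinuousLinearMap.comp_apply,
    ← toDual_gradient_fst_eq hF (hFx ..), ← toDual_gradient_snd_eq hF (hFv ..)]
  simp [InnerProductSpace.toDual_apply_apply]

end Lagrangian

theorem integrable_and_hasDerivAt_integral_apply_add_smul {E : Type*} [NormedAddCommGroup E]
    [InnerProductSpace ℝ E] [CompleteSpace E] {μ : Measure ℝ} {F : ℝ → E → E → ℝ}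
    {Fx Fv : ℝ → E → E → E} (hF : ContDiff ℝ 1 (fun p : ℝ × E × E => F p.1 p.2.1 p.2.2))
    (hFx : ∀ t x v, HasGradientAt (fun x' => F t x' v) (Fx t x v) x)
    (hFv : ∀ t x v, HasGradientAt (fun v' => F t x v') (Fv t x v) v)
    {x y v w : ℝ → E} (hx : AEStronglyMeasurable x μ) (hy : AEStronglyMeasurable y μ)
    (hv : AEStronglyMeasurable v μ) (hw : AEStronglyMeasurable w μ)
    {g gx gv : ℝ → ℝ} (hg : Integrable g μ) (hgx : Integrable gx μ) (hgv : Integrable gv μ)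
    (hF_le : ∀ᵐ t ∂μ, ∀ s ∈ Icc (-1:ℝ) 1, |F t (x t + s • y t) (v t + s • w t)| ≤ g t)
    (hFx_le : ∀ᵐ t ∂μ, ∀ s ∈ Icc (-1:ℝ) 1,
      |⟪Fx t (x t + s • y t) (v t + s • w t), y t⟫_ℝ| ≤ gx t)
    (hFv_le : ∀ᵐ t ∂μ, ∀ s ∈ Icc (-1:ℝ) 1,
      |⟪Fv t (x t + s • y t) (v t + s • w t), w t⟫_ℝ| ≤ gv t) :
    (∀ s ∈ Icc (-1:ℝ) 1, Integrable (fun t => F t (x t + s • y t) (v t + s • w t)) μ) ∧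
    Integrable (fun t => ⟪Fx t (x t) (v t), y t⟫_ℝ) μ ∧
    Integrable (fun t => ⟪Fv t (x t) (v t), w t⟫_ℝ) μ ∧
    HasDerivAt (fun s : ℝ => ∫ t, F t (x t + s • y t) (v t + s • w t) ∂μ)
      (∫ t, ⟪Fx t (x t) (v t), y t⟫_ℝ + ⟪Fv t (x t) (v t), w t⟫_ℝ ∂μ) 0 := by
  have hF₁ := hF.differentiable one_ne_zero
  have hFxc : Continuous fun p : ℝ × E × E => Fx p.1 p.2.1 p.2.2 :=
    continuous_of_toDual_eq_fderiv_comp hF fun _ => toDual_gradient_fst_eq hF₁ (hFx ..)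
  have hFvc : Continuous fun p : ℝ × E × E => Fv p.1 p.2.1 p.2.2 :=
    continuous_of_toDual_eq_fderiv_comp hF fun _ => toDual_gradient_snd_eq hF₁ (hFv ..)
  have hpath (s : ℝ) : AEStronglyMeasurable (fun t => (t, x t + s • y t, v t + s • w t)) μ :=
    aestronglyMeasurable_id.prodMk ((hx.add (hy.const_smul s)).prodMk (hv.add (hw.const_smul s)))
  have hzero : (0:ℝ) ∈ Icc (-1:ℝ) 1 := by norm_num
  have hFint (s : ℝ) (hs : s ∈ Icc (-1:ℝ) 1) :
      Integrable (fun t => F t (x t + s • y t) (v t + s • w t)) μ :=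
    hg.mono' (hF.continuous.comp_aestronglyMeasurable (hpath s)) (hF_le.mono fun t ht => ht s hs)
  have hFxint (s : ℝ) (hs : s ∈ Icc (-1:ℝ) 1) :
      Integrable (fun t => ⟪Fx t (x t + s • y t) (v t + s • w t), y t⟫_ℝ) μ :=
    hgx.mono' ((hFxc.comp_aestronglyMeasurable (hpath s)).inner hy)
      (hFx_le.mono fun t ht => ht s hs)
  have hFvint (s : ℝ) (hs : s ∈ Icc (-1:ℝ) 1) :
      Integrable (fun t => ⟪Fv t (x t + s • y t) (v t + s • w t), w t⟫_ℝ) μ :=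
    hgv.mono' ((hFvc.comp_aestronglyMeasurable (hpath s)).inner hw)
      (hFv_le.mono fun t ht => ht s hs)
  refine ⟨hFint, by simpa using hFxint 0 hzero, by simpa using hFvint 0 hzero, ?_⟩
  have hderiv := hasDerivAt_integral_of_dominated_loc_of_deriv_le (x₀ := 0)
    (Icc_mem_nhds (by norm_num : (-1:ℝ) < 0) (by norm_num : (0:ℝ) < 1))
    (Eventually.of_forall fun s => (hF.continuous.comp_aestronglyMeasurable (hpath s)))
    (hFint 0 hzero) ((hFxint 0 hzero).add (hFvint 0 hzero)).aestronglyMeasurable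
    (bound := gx + gv) ((hFx_le.and hFv_le).mono fun t ht s hs =>
      (abs_add_le _ _).trans (add_le_add (ht.1 s hs) (ht.2 s hs)))
    (hgx.add hgv)
    (ae_of_all _ fun t s _ => hasDerivAt_apply_add_smul hF₁ hFx hFv t (x t) (y t) (v t) (w t) s)
  simpa using hderiv.2

theorem principal_part_general_general {N : ℕ} (G : Euc N → ℝ)
    (hG : IsGFunction G) (G' : Euc N → Euc N)
    (hG' : ∀ x, HasGradientAt G (G' x) x)
    (a b : ℝ)
    (F : ℝ → Euc N → Euc N → ℝ)
    (hFC1 : ContDiff ℝ 1 (fun p : ℝ × Euc N × Euc N => F p.1 p.2.1 p.2.2))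
    (Fx Fv : ℝ → Euc N → Euc N → Euc N)
    (hFx : ∀ t x v, HasGradientAt (fun x' => F t x' v) (Fx t x v) x)
    (hFv : ∀ t x v, HasGradientAt (fun v' => F t x v') (Fv t x v) v)
    (aa : ℝ → ℝ) (haacont : Continuous aa)
    (bb cc : ℝ → ℝ)
    (hbb : IntegrableOn bb (Icc a b))
    (hcc : IntegrableOn cc (Icc a b))
    (hF2 : ∀ t ∈ Icc a b, ∀ x v : Euc N, |F t x v| ≤ aa ‖x‖ * (bb t + G v))
    (hF3 : ∀ t ∈ Icc a b, ∀ x v : Euc N, ‖Fx t x v‖ ≤ aa ‖x‖ * (bb t + G v))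
    (hF4 : ∀ t ∈ Icc a b, ∀ x v : Euc N,
      fenchelConj G (Fv t x v) ≤ aa ‖x‖ * (cc t + fenchelConj G (G' v)))
    (u du φ dφ : ℝ → Euc N)
    (hu : ∀ t ∈ Icc a b, u t = u a + ∫ s in a..t, du s)
    (hφ : ∀ t ∈ Icc a b, φ t = φ a + ∫ s in a..t, dφ s)
    (hMdu : MemLG G (Icc a b) du)
    (hMdφ : MemLG G (Icc a b) dφ)
    (hdu : IntegrableOn du (Icc a b)) (hdφ : IntegrableOn dφ (Icc a b)) :
    (∀ s ∈ Icc (-1 : ℝ) 1,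
      IntegrableOn (fun t => F t (u t + s • φ t) (du t + s • dφ t)) (Icc a b)) ∧
    IntegrableOn (fun t => (inner ℝ (Fx t (u t) (du t)) (φ t) : ℝ)) (Icc a b) ∧
    IntegrableOn (fun t => (inner ℝ (Fv t (u t) (du t)) (dφ t) : ℝ)) (Icc a b) ∧
    HasDerivAt
      (fun s : ℝ => ∫ t in Icc a b, F t (u t + s • φ t) (du t + s • dφ t))
      (∫ t in Icc a b,
        ((inner ℝ (Fx t (u t) (du t)) (φ t) : ℝ) +
         (inner ℝ (Fv t (u t) (du t)) (dφ t) : ℝ))) 0 := by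
  have hI : volume (Icc a b) ≠ ∞ := measure_Icc_lt_top.ne
  have huc := continuousOn_of_eq_add_intervalIntegral hdu hu
  have hφc := continuousOn_of_eq_add_intervalIntegral hdφ hφ
  obtain ⟨A, hA⟩ := isCompact_Icc.exists_bound_comp_add_smul huc hφc (haacont.comp continuous_norm)
  obtain ⟨R, hR⟩ := isCompact_Icc.exists_bound_of_continuousOn hφc
  obtain ⟨g, hg, hgG⟩ := hMdu.exists_bound_add_smul hG hI hMdφ
  obtain ⟨h, hh, hhG⟩ := (hMdu.two_smul hG hI).exists_bound_add_smul hG hI (hMdφ.two_smul hG hI)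
  have hFx_le (s : ℝ) (hs : s ∈ Icc (-1:ℝ) 1) (t : ℝ) (ht : t ∈ Icc a b) :
      ‖Fx t (u t + s • φ t) (du t + s • dφ t)‖ ≤ A * (|bb t| + g t) :=
    le_mul_abs_add_of_le_mul_add (hF3 t ht _ _) (hA s hs t ht) (hG.nonneg _) (hgG s hs t)
  refine integrable_and_hasDerivAt_integral_apply_add_smul hFC1 hFx hFv
    (huc.aestronglyMeasurable measurableSet_Icc) (hφc.aestronglyMeasurable measurableSet_Icc)
    hMdu.1 hMdφ.1 ((hbb.abs.add hg).const_mul A) (((hbb.abs.add hg).const_mul A).mul_const R)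
    (hMdφ.2.add ((hcc.abs.add hh).const_mul A)) ?_ ?_ ?_ <;>
    filter_upwards [ae_restrict_mem measurableSet_Icc] with t ht s hs
  · exact le_mul_abs_add_of_le_mul_add (hF2 t ht _ _) (hA s hs t ht) (hG.nonneg _) (hgG s hs t)
  · exact (abs_real_inner_le_norm _ _).trans (mul_le_mul (hFx_le s hs t ht) (hR t ht)
      (norm_nonneg _) ((norm_nonneg _).trans (hFx_le s hs t ht)))
  · have h2v : G ((2:ℝ) • (du t + s • dφ t)) ≤ h t := by
      simpa only [smul_add, smul_comm (2:ℝ) s] using hhG s hs t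
    refine (hG.abs_inner_le_add_fenchelConj _ _).trans (add_le_add_right ?_ _)
    exact le_mul_abs_add_of_le_mul_add (hF4 t ht _ _) (hA s hs t ht) (hG.fenchelConj_nonneg _)
      ((hG.fenchelConj_le_apply_two_smul (hG' _)).trans h2v)

/-- Directional derivative of the principal part for a general
Lagrangian F satisfying the growth conditions (F2)-(F4). -/
theorem principal_part_general {N : ℕ} (hN : 1 ≤ N) (G : Euc N → ℝ)
    (hG : IsGFunction G) (G' : Euc N → Euc N)
    (hG' : ∀ x, HasGradientAt G (G' x) x) (hG'cont : Continuous G')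
    (a b : ℝ) (hab : a < b)
    (F : ℝ → Euc N → Euc N → ℝ)
    (hFC1 : ContDiff ℝ 1 (fun p : ℝ × Euc N × Euc N => F p.1 p.2.1 p.2.2))
    (Fx Fv : ℝ → Euc N → Euc N → Euc N)
    (hFx : ∀ t x v, HasGradientAt (fun x' => F t x' v) (Fx t x v) x)
    (hFv : ∀ t x v, HasGradientAt (fun v' => F t x v') (Fv t x v) v)
    (aa : ℝ → ℝ) (haacont : Continuous aa) (haapos : ∀ s : ℝ, 0 ≤ s → 0 ≤ aa s)
    (bb cc : ℝ → ℝ)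
    (hbb : IntegrableOn bb (Icc a b)) (hbbpos : ∀ t ∈ Icc a b, 0 ≤ bb t)
    (hcc : IntegrableOn cc (Icc a b)) (hccpos : ∀ t ∈ Icc a b, 0 ≤ cc t)
    (hF2 : ∀ t ∈ Icc a b, ∀ x v : Euc N, |F t x v| ≤ aa ‖x‖ * (bb t + G v))
    (hF3 : ∀ t ∈ Icc a b, ∀ x v : Euc N, ‖Fx t x v‖ ≤ aa ‖x‖ * (bb t + G v))
    (hF4 : ∀ t ∈ Icc a b, ∀ x v : Euc N,
      fenchelConj G (Fv t x v) ≤ aa ‖x‖ * (cc t + fenchelConj G (G' v)))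
    (u du φ dφ : ℝ → Euc N)
    (hu : ∀ t ∈ Icc a b, u t = u a + ∫ s in a..t, du s)
    (hφ : ∀ t ∈ Icc a b, φ t = φ a + ∫ s in a..t, dφ s)
    (hMu : MemLG G (Icc a b) u) (hMdu : MemLG G (Icc a b) du)
    (hMφ : MemLG G (Icc a b) φ) (hMdφ : MemLG G (Icc a b) dφ)
    (hdu : IntegrableOn du (Icc a b)) (hdφ : IntegrableOn dφ (Icc a b)) :
    (∀ s ∈ Icc (-1 : ℝ) 1,
      IntegrableOn (fun t => F t (u t + s • φ t) (du t + s • dφ t)) (Icc a b)) ∧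
    IntegrableOn (fun t => (inner ℝ (Fx t (u t) (du t)) (φ t) : ℝ)) (Icc a b) ∧
    IntegrableOn (fun t => (inner ℝ (Fv t (u t) (du t)) (dφ t) : ℝ)) (Icc a b) ∧
    HasDerivAt
      (fun s : ℝ => ∫ t in Icc a b, F t (u t + s • φ t) (du t + s • dφ t))
      (∫ t in Icc a b,
        ((inner ℝ (Fx t (u t) (du t)) (φ t) : ℝ) +
         (inner ℝ (Fv t (u t) (du t)) (dφ t) : ℝ))) 0 :=
  principal_part_general_general G hG G' hG' a b F hFC1 Fx Fv hFx hFv aa haacont bb cc hbb hcc hF2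
    hF3 hF4 u du φ dφ hu hφ hMdu hMdφ hdu hdφ
end
end
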